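/- arXiv:2407.00482 — 5 statements merged into one kernel-verified Lean document; each statement's English description precedes it below -/
import Mathlib

section
/- Let Y, F, B be finite random variables with joint distribution P. Define Uni(Y; B|F) = min over Q in Δ_P of I_Q(Y; B | F), where Δ_P is the set of joint distributions Q on (Y,F,B) with Q_{YF} = P_{YF} and Q_{YB} = P_{YB}. Then Uni(Y; B|F) = 0 if and only if there exists a row-stochastic matrix T ∈ [0,1]^{|F|×|B|} (i.e., each row sums to 1) such that P_{YB}(y,b) = Σ_f P_{YF}(y,f) T(f,b) for all y, b. -/
open scoped BigOperators

section PID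

/-- A joint probability distribution on a product of three finite types,
represented as a nonnegative function summing to one. -/
def IsDist3 {Y F B : Type*} [Fintype Y] [Fintype F] [Fintype B]
    (P : Y → F → B → ℝ) : Prop :=
  (∀ y f b, 0 ≤ P y f b) ∧ ∑ y, ∑ f, ∑ b, P y f b = 1

/-- Marginal on (Y, F). -/
def margYF {Y F B : Type*} [Fintype B] (P : Y → F → B → ℝ) (y : Y) (f : F) : ℝ :=
  ∑ b, P y f b

/-- Marginal on (Y, B). -/
def margYB {Y F B : Type*} [Fintype F] (P : Y → F → B → ℝ) (y : Y) (b : B) : ℝ :=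
  ∑ f, P y f b

/-- Marginal on (F, B). -/
def margFB {Y F B : Type*} [Fintype Y] (P : Y → F → B → ℝ) (f : F) (b : B) : ℝ :=
  ∑ y, P y f b

/-- Marginal on Y. -/
def margY {Y F B : Type*} [Fintype F] [Fintype B] (P : Y → F → B → ℝ) (y : Y) : ℝ :=
  ∑ f, ∑ b, P y f b

/-- Marginal on F. -/
def margF {Y F B : Type*} [Fintype Y] [Fintype B] (P : Y → F → B → ℝ) (f : F) : ℝ :=
  ∑ y, ∑ b, P y f b

/-- Marginal on B. -/
def margB {Y F B : Type*} [Fintype Y] [Fintype F] (P : Y → F → B → ℝ) (b : B) : ℝ :=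
  ∑ y, ∑ f, P y f b

/-- Conditional mutual information I_Q(Y ; B | F) for a joint distribution `Q`
on `Y × F × B` (natural log; `0 log 0 = 0` conventions via `Real.log 0 = 0`
and division-by-zero conventions). -/
noncomputable def condMI {Y F B : Type*} [Fintype Y] [Fintype F] [Fintype B]
    (Q : Y → F → B → ℝ) : ℝ :=
  ∑ y, ∑ f, ∑ b, Q y f b *
    Real.log ((Q y f b * margF Q f) / (margYF Q y f * margFB Q f b))

/-- Mutual information I_P(Y ; B). -/
noncomputable def mutYB {Y F B : Type*} [Fintype Y] [Fintype F] [Fintype B]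
    (P : Y → F → B → ℝ) : ℝ :=
  ∑ y, ∑ b, margYB P y b * Real.log (margYB P y b / (margY P y * margB P b))

/-- Mutual information I_P(Y ; F). -/
noncomputable def mutYF {Y F B : Type*} [Fintype Y] [Fintype F] [Fintype B]
    (P : Y → F → B → ℝ) : ℝ :=
  ∑ y, ∑ f, margYF P y f * Real.log (margYF P y f / (margY P y * margF P f))

/-- Mutual information I_P(Y ; (F, B)). -/
noncomputable def mutYFB {Y F B : Type*} [Fintype Y] [Fintype F] [Fintype B]
    (P : Y → F → B → ℝ) : ℝ :=
  ∑ y, ∑ f, ∑ b, P y f b * Real.log (P y f b / (margY P y * margFB P f b))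

/-- The feasible set Δ_P of joint distributions matching the (Y,F) and (Y,B)
marginals of `P`. -/
def Delta {Y F B : Type*} [Fintype Y] [Fintype F] [Fintype B]
    (P : Y → F → B → ℝ) : Set (Y → F → B → ℝ) :=
  {Q | IsDist3 Q ∧ (∀ y f, margYF Q y f = margYF P y f) ∧
      (∀ y b, margYB Q y b = margYB P y b)}

/-- Unique information Uni(Y ; B | F) (Bertschinger et al.):
the infimum of I_Q(Y ; B | F) over Q ∈ Δ_P. -/
noncomputable def uni {Y F B : Type*} [Fintype Y] [Fintype F] [Fintype B]
    (P : Y → F → B → ℝ) : ℝ :=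
  sInf (condMI '' Delta P)

/-- A matrix with entries in [0,1] whose rows each sum to 1. -/
def RowStochastic {F B : Type*} [Fintype B] (T : F → B → ℝ) : Prop :=
  (∀ f b, 0 ≤ T f b ∧ T f b ≤ 1) ∧ ∀ f, ∑ b, T f b = 1

end PID

/-! The key estimate is a Pinsker-type inequality for conditional mutual information: writing
`Q*(y,f,b) = Q(y,f) Q(b | f)` for the Markov chain `Y - F - B` with the same `(Y,F)` law and the
same channel from `F` to `B` as `Q`, one has `∑ (Q - Q*)² ≤ 4 I_Q(Y ; B | F)`. Every `Q ∈ Δ_P`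
therefore gives a row-stochastic `T = Q(· | ·)` for which `∑_f P(y,f) T(f,b)` is within
`O(√I_Q(Y ; B | F))` of `P(y,b)`. If `Uni(Y ; B | F) = 0` these vectors approach `P_{YB}`, and
the set of vectors `∑_f P(y,f) T(f,b)` is compact, being a continuous image of the compact set
of row-stochastic matrices; so `P_{YB}` is one of them. Conversely the Markov chain built from a
row-stochastic `T` lies in `Δ_P` and has zero conditional mutual information. -/

open Finset

section Markov

variable {Y F B : Type*}

def markovJoint (A : Y → F → ℝ) (T : F → B → ℝ) (y : Y) (f : F) (b : B) : ℝ :=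
  A y f * T f b

lemma margYF_markovJoint [Fintype B] {A : Y → F → ℝ} {T : F → B → ℝ}
    (hT : ∀ f, ∑ b, T f b = 1) : margYF (markovJoint A T) = A := by
  ext y f
  simp only [margYF, markovJoint, ← mul_sum, hT, mul_one]

lemma isDist3_markovJoint [Fintype Y] [Fintype F] [Fintype B] {A : Y → F → ℝ}
    {T : F → B → ℝ} (hA : ∀ y f, 0 ≤ A y f) (hsum : ∑ y, ∑ f, A y f = 1)
    (hT : RowStochastic T) : IsDist3 (markovJoint A T) := by
  refine ⟨fun y f b => mul_nonneg (hA y f) (hT.1 f b).1, ?_⟩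
  change ∑ y, ∑ f, margYF (markovJoint A T) y f = 1
  rwa [margYF_markovJoint hT.2]

lemma condMI_markovJoint [Fintype Y] [Fintype F] [Fintype B] (A : Y → F → ℝ)
    {T : F → B → ℝ} (hT : ∀ f, ∑ b, T f b = 1) : condMI (markovJoint A T) = 0 := by
  have hF : ∀ f, margF (markovJoint A T) f = ∑ y, A y f := fun f => by
    change ∑ y, margYF (markovJoint A T) y f = _
    rw [margYF_markovJoint hT]
  have hFB : ∀ f b, margFB (markovJoint A T) f b = (∑ y, A y f) * T f b := fun f b => by
    simp only [margFB, markovJoint, sum_mul]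
  refine sum_eq_zero fun y _ => sum_eq_zero fun f _ => sum_eq_zero fun b _ => ?_
  rw [hF, hFB, margYF_markovJoint hT, markovJoint,
    show A y f * T f b * ∑ y, A y f = A y f * ((∑ y, A y f) * T f b) by ring,
    Real.log_div_self, mul_zero]

variable {Q : Y → F → B → ℝ}

-- The conditional law of `B` given `F` under `Q`, taken uniform where `F` has mass zero.
noncomputable def channelFB [Fintype Y] [Fintype B] (Q : Y → F → B → ℝ) (f : F) (b : B) : ℝ :=
  if margF Q f = 0 then (Fintype.card B : ℝ)⁻¹ else margFB Q f b / margF Q f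

lemma IsDist3.nonempty [Fintype Y] [Fintype F] [Fintype B] (hQ : IsDist3 Q) : Nonempty B := by
  by_contra h
  rw [not_nonempty_iff] at h
  simpa using hQ.2

lemma IsDist3.le_one [Fintype Y] [Fintype F] [Fintype B] (hQ : IsDist3 Q) (y : Y) (f : F)
    (b : B) : Q y f b ≤ 1 := by
  have hQ0 := hQ.1
  calc Q y f b ≤ ∑ b, Q y f b := single_le_sum (fun b _ => hQ0 y f b) (mem_univ b)
    _ ≤ ∑ f, ∑ b, Q y f b :=
      single_le_sum (f := fun f => ∑ b, Q y f b)
        (fun f _ => sum_nonneg fun b _ => hQ0 y f b) (mem_univ f)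
    _ ≤ ∑ y, ∑ f, ∑ b, Q y f b :=
      single_le_sum (f := fun y => ∑ f, ∑ b, Q y f b)
        (fun y _ => sum_nonneg fun f _ => sum_nonneg fun b _ => hQ0 y f b) (mem_univ y)
    _ = 1 := hQ.2

lemma sum_margFB_eq_margF [Fintype Y] [Fintype B] (f : F) : ∑ b, margFB Q f b = margF Q f :=
  sum_comm

lemma margFB_le_margF [Fintype Y] [Fintype B] (hQ : ∀ y f b, 0 ≤ Q y f b) (f : F) (b : B) :
    margFB Q f b ≤ margF Q f :=
  sum_le_sum fun y _ => single_le_sum (fun b _ => hQ y f b) (mem_univ b)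

lemma rowStochastic_channelFB [Fintype Y] [Fintype B] [Nonempty B]
    (hQ : ∀ y f b, 0 ≤ Q y f b) : RowStochastic (channelFB Q) := by
  have hF : ∀ f, 0 ≤ margF Q f := fun f => sum_nonneg fun y _ => sum_nonneg fun b _ => hQ y f b
  refine ⟨fun f b => ?_, fun f => ?_⟩ <;> by_cases h : margF Q f = 0 <;>
    simp only [channelFB, h, if_true, if_false]
  · exact ⟨inv_nonneg.2 (Nat.cast_nonneg _),
      inv_le_one_of_one_le₀ (Nat.one_le_cast.2 Fintype.card_pos)⟩
  · exact ⟨div_nonneg (sum_nonneg fun y _ => hQ y f b) (hF f),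
      div_le_one_of_le₀ (margFB_le_margF hQ f b) (hF f)⟩
  · simp [Fintype.card_ne_zero]
  · rw [← sum_div, sum_margFB_eq_margF, div_self h]

noncomputable def markovProj [Fintype Y] [Fintype B] (Q : Y → F → B → ℝ) : Y → F → B → ℝ :=
  markovJoint (margYF Q) (channelFB Q)

lemma isDist3_markovProj [Fintype Y] [Fintype F] [Fintype B] (hQ : IsDist3 Q) :
    IsDist3 (markovProj Q) :=
  have := hQ.nonempty
  isDist3_markovJoint (fun y f => sum_nonneg fun b _ => hQ.1 y f b) hQ.2
    (rowStochastic_channelFB hQ.1)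

end Markov

lemma sub_add_sq_div_four_le_mul_log_div {p q : ℝ} (hp : 0 < p) (hq : 0 < q) (hpq : p + q ≤ 2) :
    p - q + (p - q) ^ 2 / 4 ≤ p * Real.log (p / q) := by
  set r := (p + q) / 2 with hr_def
  have hr : 0 < r := by positivity
  have hr1 : r ≤ 1 := by linarith
  -- Splitting `p / q = (p / r) (r / q)` and using `log x ≤ x - 1` twice gives the exact bound
  -- `p - q + (p - q)² / (4 r)`, and `r ≤ 1`.
  have h1 := mul_le_mul_of_nonneg_left (Real.log_le_sub_one_of_pos (div_pos hr hp)) hp.le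
  have h2 := mul_le_mul_of_nonneg_left (Real.log_le_sub_one_of_pos (div_pos hq hr)) hp.le
  have hlog : Real.log (p / q) = -Real.log (r / p) - Real.log (q / r) := by
    rw [Real.log_div hp.ne' hq.ne', Real.log_div hr.ne' hp.ne', Real.log_div hq.ne' hr.ne']
    ring
  have hexact : p - q + (p - q) ^ 2 / (4 * r) = p * (1 - r / p) + p * (1 - q / r) := by
    field_simp
    ring
  calc p - q + (p - q) ^ 2 / 4 ≤ p - q + (p - q) ^ 2 / (4 * r) := by
        gcongr
        linarith
    _ ≤ p * Real.log (p / q) := by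
        rw [hexact, hlog]
        nlinarith

section Pinsker

variable {Y F B : Type*} [Fintype Y] [Fintype F] [Fintype B] {Q : Y → F → B → ℝ}

lemma sub_markovProj_add_sq_le_condMI_term (hQ : IsDist3 Q) (y : Y) (f : F) (b : B) :
    Q y f b - markovProj Q y f b + (Q y f b - markovProj Q y f b) ^ 2 / 4 ≤
      Q y f b * Real.log (Q y f b * margF Q f / (margYF Q y f * margFB Q f b)) := by
  have h0 := (isDist3_markovProj hQ).1 y f b
  have h1 := (isDist3_markovProj hQ).le_one y f b
  rcases (hQ.1 y f b).eq_or_lt with hzero | hp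
  · rw [← hzero]
    nlinarith
  have hYF : 0 < margYF Q y f := hp.trans_le (single_le_sum (fun b _ => hQ.1 y f b) (mem_univ b))
  have hFB : 0 < margFB Q f b := hp.trans_le (single_le_sum (fun y _ => hQ.1 y f b) (mem_univ y))
  have hF : 0 < margF Q f := hFB.trans_le (margFB_le_margF hQ.1 f b)
  have hstar : markovProj Q y f b = margYF Q y f * margFB Q f b / margF Q f := by
    simp only [markovProj, markovJoint, channelFB, hF.ne', if_false]
    ring
  have harg : Q y f b * margF Q f / (margYF Q y f * margFB Q f b) =
      Q y f b / markovProj Q y f b := by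
    rw [hstar]
    field_simp
  rw [harg]
  exact sub_add_sq_div_four_le_mul_log_div hp (hstar ▸ by positivity)
    (by linarith [hQ.le_one y f b])

lemma sum_sq_sub_markovProj_le (hQ : IsDist3 Q) :
    ∑ y, ∑ f, ∑ b, (Q y f b - markovProj Q y f b) ^ 2 ≤ 4 * condMI Q := by
  have hterm := sum_le_sum fun y (_ : y ∈ univ) => sum_le_sum fun f (_ : f ∈ univ) =>
    sum_le_sum fun b (_ : b ∈ univ) => sub_markovProj_add_sq_le_condMI_term hQ y f b
  have hlin : ∑ y, ∑ f, ∑ b, (Q y f b - markovProj Q y f b) = 0 := by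
    simp only [sum_sub_distrib]
    rw [hQ.2, (isDist3_markovProj hQ).2, sub_self]
  simp only [sum_add_distrib, ← sum_div, hlin] at hterm
  rw [condMI]
  linarith

lemma condMI_nonneg (hQ : IsDist3 Q) : 0 ≤ condMI Q := by
  have := sum_sq_sub_markovProj_le hQ
  have : 0 ≤ ∑ y, ∑ f, ∑ b, (Q y f b - markovProj Q y f b) ^ 2 := by positivity
  linarith

lemma sq_margYB_sub_margYB_markovProj_le (hQ : IsDist3 Q) (y : Y) (b : B) :
    (margYB Q y b - margYB (markovProj Q) y b) ^ 2 ≤ 4 * Fintype.card F * condMI Q := by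
  set d := fun y f b => Q y f b - markovProj Q y f b
  calc (margYB Q y b - margYB (markovProj Q) y b) ^ 2 = (∑ f, d y f b) ^ 2 := by
        rw [margYB, margYB, sum_sub_distrib]
    _ ≤ Fintype.card F * ∑ f, d y f b ^ 2 := sq_sum_le_card_mul_sum_sq
    _ ≤ Fintype.card F * ∑ y, ∑ f, ∑ b, d y f b ^ 2 := by
        gcongr
        calc ∑ f, d y f b ^ 2 ≤ ∑ f, ∑ b, d y f b ^ 2 :=
              sum_le_sum fun f _ => single_le_sum (fun b _ => sq_nonneg (d y f b)) (mem_univ b)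
          _ ≤ ∑ y, ∑ f, ∑ b, d y f b ^ 2 :=
              single_le_sum (f := fun y => ∑ f, ∑ b, d y f b ^ 2)
                (fun y _ => by positivity) (mem_univ y)
    _ ≤ Fintype.card F * (4 * condMI Q) := by
        gcongr
        exact sum_sq_sub_markovProj_le hQ
    _ = 4 * Fintype.card F * condMI Q := by ring

end Pinsker

lemma isCompact_rowStochastic {F B : Type*} [Finite F] [Fintype B] :
    IsCompact {T : F → B → ℝ | RowStochastic T} := by
  have hset : {T : F → B → ℝ | RowStochastic T} =
      (⋂ f, ⋂ b, {T | T f b ∈ Set.Icc 0 1}) ∩ ⋂ f, {T | ∑ b, T f b = 1} := by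
    ext T
    simp [RowStochastic]
  have hclosed : IsClosed {T : F → B → ℝ | RowStochastic T} := by
    rw [hset]
    exact (isClosed_iInter fun f => isClosed_iInter fun b =>
      isClosed_Icc.preimage (by fun_prop)).inter
        (isClosed_iInter fun f => isClosed_eq (by fun_prop) continuous_const)
  refine (isCompact_univ_pi fun _ => isCompact_univ_pi fun _ =>
    isCompact_Icc (a := (0 : ℝ)) (b := 1)).of_isClosed_subset hclosed fun T hT => ?_
  simp only [Set.mem_univ_pi]
  exact fun f b => hT.1 f b

section Uni

variable {Y F B : Type*} [Fintype Y] [Fintype F] [Fintype B] {P : Y → F → B → ℝ}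

lemma uni_eq_zero_iff (hP : IsDist3 P) :
    uni P = 0 ↔ ∀ ε > 0, ∃ Q ∈ Delta P, condMI Q < ε := by
  have hne : (condMI '' Delta P).Nonempty := ⟨_, P, ⟨hP, fun _ _ => rfl, fun _ _ => rfl⟩, rfl⟩
  have hlb : ∀ x ∈ condMI '' Delta P, 0 ≤ x := by
    rintro _ ⟨Q, hQ, rfl⟩
    exact condMI_nonneg hQ.1
  refine ⟨fun h ε hε => ?_, fun h => le_antisymm ?_ (le_csInf hne hlb)⟩
  · obtain ⟨_, ⟨Q, hQ, rfl⟩, hlt⟩ := exists_lt_of_csInf_lt hne (h.trans_lt hε)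
    exact ⟨Q, hQ, hlt⟩
  · refine le_of_forall_pos_lt_add fun ε hε => ?_
    obtain ⟨Q, hQ, hlt⟩ := h ε hε
    exact (csInf_le ⟨0, hlb⟩ ⟨Q, hQ, rfl⟩).trans_lt (by linarith)

lemma margYB_mem_closure_of_uni_eq_zero (hP : IsDist3 P) (h : uni P = 0) :
    margYB P ∈ closure
      ((fun T => margYB (markovJoint (margYF P) T)) '' {T | RowStochastic T}) := by
  rw [Metric.mem_closure_iff]
  intro ε hε
  obtain ⟨Q, ⟨hQ, hYF, hYB⟩, hlt⟩ :=
    (uni_eq_zero_iff hP).1 h (ε ^ 2 / (4 * (Fintype.card F + 1))) (by positivity)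
  have := hQ.nonempty
  refine ⟨_, ⟨channelFB Q, rowStochastic_channelFB hQ.1, rfl⟩, ?_⟩
  rw [dist_pi_lt_iff hε]
  intro y
  rw [dist_pi_lt_iff hε]
  intro b
  rw [Real.dist_eq, ← hYB, ← funext₂ hYF]
  refine abs_lt_of_sq_lt_sq ?_ hε.le
  calc (margYB Q y b - margYB (markovProj Q) y b) ^ 2
        ≤ 4 * Fintype.card F * condMI Q := sq_margYB_sub_margYB_markovProj_le hQ y b
    _ ≤ 4 * (Fintype.card F + 1) * condMI Q := by
        have := condMI_nonneg hQ
        nlinarith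
    _ < ε ^ 2 := by
        rwa [lt_div_iff₀' (by positivity)] at hlt

end Uni

/-- Uni(Y;B|F) = 0 iff there is a row-stochastic matrix T with
P_{YB}(y,b) = Σ_f P_{YF}(y,f) T(f,b). -/
theorem stmt0 {Y F B : Type*} [Fintype Y] [Fintype F] [Fintype B]
    (P : Y → F → B → ℝ) (hP : IsDist3 P) :
    uni P = 0 ↔ ∃ T : F → B → ℝ, RowStochastic T ∧
      ∀ y b, margYB P y b = ∑ f, margYF P y f * T f b := by
  constructor
  · intro h
    have hcont : Continuous fun T : F → B → ℝ => margYB (markovJoint (margYF P) T) :=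
      continuous_pi fun _ => continuous_pi fun b => continuous_finsetSum _ fun f _ =>
        continuous_const.mul ((continuous_apply b).comp (continuous_apply f))
    have hclosed := (isCompact_rowStochastic.image hcont).isClosed
    obtain ⟨T, hT, hTP⟩ := hclosed.closure_eq ▸ margYB_mem_closure_of_uni_eq_zero hP h
    exact ⟨T, hT, fun y b => (congrFun (congrFun hTP y) b).symm⟩
  · rintro ⟨T, hT, hTP⟩
    have hQ : markovJoint (margYF P) T ∈ Delta P :=
      ⟨isDist3_markovJoint (fun y f => sum_nonneg fun b _ => hP.1 y f b) hP.2 hT,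
        fun y f => by rw [margYF_markovJoint hT.2], fun y b => (hTP y b).symm⟩
    exact (uni_eq_zero_iff hP).2 fun ε hε =>
      ⟨_, hQ, (condMI_markovJoint (margYF P) hT.2).trans_lt hε⟩
end

section
/- Unique information is antitone in the conditioning argument: for finite random variables Y, F, F', B, Uni(Y; B|(F,F')) ≤ Uni(Y; B|F). That is, enlarging the set of core features cannot increase the unique information of B about Y. -/
open scoped BigOperators

section Aux

lemma hlog_aux (a x : ℝ) (ha : 0 < a) (hx : 0 < x) : a - a / x ≤ a * Real.log x := by
  have h := Real.log_le_sub_one_of_pos (inv_pos.mpr hx)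
  rw [Real.log_inv] at h
  have h2 : 1 - x⁻¹ ≤ Real.log x := by linarith
  have h3 := mul_le_mul_of_nonneg_left h2 ha.le
  have : a / x = a * x⁻¹ := div_eq_mul_inv a x
  nlinarith

lemma core {Y F F' B : Type*} [Fintype Y] [Fintype F] [Fintype F'] [Fintype B]
    (P : Y → (F × F') → B → ℝ) (hP : IsDist3 P)
    (Q : Y → F → B → ℝ) (hQ : Q ∈ Delta (fun y f b => ∑ f' : F', P y (f, f') b)) :
    ∃ Q' ∈ Delta P, condMI Q' ≤ condMI Q := by
  obtain ⟨⟨hQ0, hQ1⟩, hQYF, hQYB⟩ := hQ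
  have hP0 := hP.1
  -- abbreviations
  set A : Y → F → ℝ := fun y f => margYF Q y f with hAdef
  set lam : Y → F → F' → ℝ := fun y f f' => margYF P y (f, f') / A y f with hlamdef
  set Q' : Y → (F × F') → B → ℝ := fun y g b => Q y g.1 b * lam y g.1 g.2 with hQ'def
  have hA0 : ∀ y f, 0 ≤ A y f := fun y f => Finset.sum_nonneg fun b _ => hQ0 y f b
  have hmP0 : ∀ y (g : F × F'), 0 ≤ margYF P y g :=
    fun y g => Finset.sum_nonneg fun b _ => hP0 y g b
  have hlam0 : ∀ y f f', 0 ≤ lam y f f' := fun y f f' =>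
    div_nonneg (hmP0 y (f, f')) (hA0 y f)
  have hAeq : ∀ y f, A y f = ∑ f', margYF P y (f, f') := by
    intro y f
    rw [hAdef]
    simp only
    rw [hQYF y f]
    simp only [margYF]
    exact Finset.sum_comm
  have hq_le_A : ∀ y f b, Q y f b ≤ A y f := fun y f b =>
    Finset.single_le_sum (fun b' _ => hQ0 y f b') (Finset.mem_univ b)
  have hA0q : ∀ y f b, A y f = 0 → Q y f b = 0 := fun y f b h =>
    le_antisymm (h ▸ hq_le_A y f b) (hQ0 y f b)
  have hAlam : ∀ y f f', A y f * lam y f f' = margYF P y (f, f') := by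
    intro y f f'
    rcases eq_or_ne (A y f) 0 with h | h
    · rw [h, zero_mul]
      have h2 : ∑ f'', margYF P y (f, f'') = 0 := (hAeq y f).symm.trans h
      have := (Finset.sum_eq_zero_iff_of_nonneg
        (fun f'' _ => hmP0 y (f, f''))).mp h2 f' (Finset.mem_univ f')
      exact this.symm
    · rw [hlamdef]; field_simp
  have hlamsum : ∀ y f, A y f ≠ 0 → ∑ f', lam y f f' = 1 := by
    intro y f h
    rw [hlamdef]
    simp only
    rw [← Finset.sum_div, ← hAeq y f, div_self h]
  have hqlam : ∀ y f b, Q y f b * ∑ f', lam y f f' = Q y f b := by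
    intro y f b
    rcases eq_or_ne (A y f) 0 with h | h
    · rw [hA0q y f b h, zero_mul]
    · rw [hlamsum y f h, mul_one]
  have hAlamsum : ∀ y f, A y f * ∑ f', lam y f f' = A y f := by
    intro y f
    rcases eq_or_ne (A y f) 0 with h | h
    · rw [h, zero_mul]
    · rw [hlamsum y f h, mul_one]
  -- Q' is in Delta P
  have hQ'0 : ∀ y (g : F × F') b, 0 ≤ Q' y g b := fun y g b =>
    mul_nonneg (hQ0 y g.1 b) (hlam0 y g.1 g.2)
  have hQ'YF : ∀ y f f', margYF Q' y (f, f') = A y f * lam y f f' := by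
    intro y f f'
    simp only [margYF, hQ'def]
    rw [← Finset.sum_mul]
    rfl
  have hQ'YFP : ∀ y (g : F × F'), margYF Q' y g = margYF P y g := by
    intro y ⟨f, f'⟩
    rw [hQ'YF y f f', hAlam y f f']
  have hQ'FB : ∀ f f' b, margFB Q' (f, f') b = ∑ y, Q y f b * lam y f f' := by
    intro f f' b; rfl
  have hQ'F : ∀ f f', margF Q' (f, f') = ∑ y, A y f * lam y f f' := by
    intro f f'
    simp only [margF, hQ'def]
    exact Finset.sum_congr rfl fun y _ => by rw [← Finset.sum_mul]; rfl
  have hQ'YB : ∀ y b, margYB Q' y b = margYB P y b := by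
    intro y b
    have h1 : margYB Q' y b = ∑ f, ∑ f', Q y f b * lam y f f' := by
      simp only [margYB]
      rw [Fintype.sum_prod_type]
    rw [h1]
    have h2 : ∀ f, ∑ f', Q y f b * lam y f f' = Q y f b := by
      intro f
      rw [← Finset.mul_sum]
      exact hqlam y f b
    rw [Finset.sum_congr rfl fun f _ => h2 f]
    have h3 : margYB P y b = ∑ f, ∑ f', P y (f, f') b := by
      simp only [margYB]
      rw [Fintype.sum_prod_type]
    rw [h3]
    have := hQYB y b
    simp only [margYB] at this ⊢
    exact this
  have hQ'1 : ∑ y, ∑ g : F × F', ∑ b, Q' y g b = 1 := by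
    have h1 : ∀ y, ∑ g : F × F', ∑ b, Q' y g b = ∑ f, ∑ b, Q y f b := by
      intro y
      rw [Fintype.sum_prod_type]
      refine Finset.sum_congr rfl fun f _ => ?_
      rw [Finset.sum_comm]
      refine Finset.sum_congr rfl fun b _ => ?_
      simp only [hQ'def]
      rw [← Finset.mul_sum]
      exact hqlam y f b
    rw [Finset.sum_congr rfl fun y _ => h1 y]
    exact hQ1
  have hQ'mem : Q' ∈ Delta P := ⟨⟨hQ'0, hQ'1⟩, hQ'YFP, fun y b => hQ'YB y b⟩
  refine ⟨Q', hQ'mem, ?_⟩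
  -- abbreviations for marginals
  set MF : F → ℝ := fun f => margF Q f with hMFdef
  set Dd : F → B → ℝ := fun f b => margFB Q f b with hDddef
  set C : F → F' → B → ℝ := fun f f' b => ∑ y, Q y f b * lam y f f' with hCdef
  set m2 : F → F' → ℝ := fun f f' => ∑ y, A y f * lam y f f' with hm2def
  set w : Y → F → F' → B → ℝ :=
    fun y f f' b => Q y f b * lam y f f' * (Dd f b * m2 f f' / (C f f' b * MF f)) with hwdef
  have hMF0 : ∀ f, 0 ≤ MF f := fun f =>
    Finset.sum_nonneg fun y _ => Finset.sum_nonneg fun b _ => hQ0 y f b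
  have hDd0 : ∀ f b, 0 ≤ Dd f b := fun f b => Finset.sum_nonneg fun y _ => hQ0 y f b
  have hC0 : ∀ f f' b, 0 ≤ C f f' b := fun f f' b =>
    Finset.sum_nonneg fun y _ => mul_nonneg (hQ0 y f b) (hlam0 y f f')
  have hm20 : ∀ f f', 0 ≤ m2 f f' := fun f f' =>
    Finset.sum_nonneg fun y _ => mul_nonneg (hA0 y f) (hlam0 y f f')
  have hMFA : ∀ f, MF f = ∑ y, A y f := fun f => rfl
  have hA_le_MF : ∀ y f, A y f ≤ MF f := by
    intro y f
    rw [hMFA f]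
    exact Finset.single_le_sum (fun y' _ => hA0 y' f) (Finset.mem_univ y)
  have hq_le_Dd : ∀ y f b, Q y f b ≤ Dd f b := fun y f b =>
    Finset.single_le_sum (fun y' _ => hQ0 y' f b) (Finset.mem_univ y)
  have hqlam_le_C : ∀ y f f' b, Q y f b * lam y f f' ≤ C f f' b := fun y f f' b =>
    Finset.single_le_sum (fun y' _ => mul_nonneg (hQ0 y' f b) (hlam0 y' f f'))
      (Finset.mem_univ y)
  have hAlam_le_m2 : ∀ y f f', A y f * lam y f f' ≤ m2 f f' := fun y f f' =>
    Finset.single_le_sum (fun y' _ => mul_nonneg (hA0 y' f) (hlam0 y' f f'))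
      (Finset.mem_univ y)
  have hDdsum : ∀ f, ∑ b, Dd f b = MF f := by
    intro f
    simp only [hDddef, hMFdef, margFB, margF]
    exact Finset.sum_comm
  have hm2sum : ∀ f, ∑ f', m2 f f' = MF f := by
    intro f
    rw [hMFA f, hm2def]
    simp only
    rw [Finset.sum_comm]
    refine Finset.sum_congr rfl fun y _ => ?_
    rw [← Finset.mul_sum]
    exact hAlamsum y f
  have hQ'app : ∀ y f f' b, Q' y (f, f') b = Q y f b * lam y f f' := fun y f f' b => rfl
  -- rewriting the two condMI expressions
  have hCMIQ' : condMI Q' = ∑ y, ∑ f, ∑ f', ∑ b, (Q y f b * lam y f f') *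
      Real.log ((Q y f b * lam y f f') * m2 f f' /
        ((A y f * lam y f f') * C f f' b)) := by
    unfold condMI
    refine Finset.sum_congr rfl fun y _ => ?_
    rw [Fintype.sum_prod_type]
    refine Finset.sum_congr rfl fun f _ => Finset.sum_congr rfl fun f' _ =>
      Finset.sum_congr rfl fun b _ => ?_
    rw [hQ'app y f f' b, hQ'YF y f f',
      show margF Q' (f, f') = m2 f f' from hQ'F f f',
      show margFB Q' (f, f') b = C f f' b from hQ'FB f f' b]
  have hCMIQ : condMI Q = ∑ y, ∑ f, ∑ f', ∑ b, (Q y f b * lam y f f') *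
      Real.log (Q y f b * MF f / (A y f * Dd f b)) := by
    unfold condMI
    refine Finset.sum_congr rfl fun y _ => Finset.sum_congr rfl fun f _ => ?_
    rw [Finset.sum_comm]
    refine Finset.sum_congr rfl fun b _ => ?_
    rw [← Finset.sum_mul, ← Finset.mul_sum, hqlam y f b]
  -- pointwise key inequality
  have hkey : ∀ y f f' b, (Q y f b * lam y f f') *
      Real.log ((Q y f b * lam y f f') * m2 f f' / ((A y f * lam y f f') * C f f' b)) ≤
      (Q y f b * lam y f f') * Real.log (Q y f b * MF f / (A y f * Dd f b)) -
        ((Q y f b * lam y f f') - w y f f' b) := by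
    intro y f f' b
    have hp0 : 0 ≤ Q y f b * lam y f f' := mul_nonneg (hQ0 y f b) (hlam0 y f f')
    rcases eq_or_lt_of_le hp0 with h | h
    · have hw0 : w y f f' b = 0 := by
        rw [hwdef]; simp only; rw [← h, zero_mul]
      rw [hw0, ← h]
      simp
    · have hqpos : 0 < Q y f b := by
        rcases (hQ0 y f b).lt_or_eq with h2 | h2
        · exact h2
        · rw [← h2, zero_mul] at h; exact absurd h (lt_irrefl 0)
      have hlampos : 0 < lam y f f' := by
        rcases (hlam0 y f f').lt_or_eq with h2 | h2
        · exact h2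
        · rw [← h2, mul_zero] at h; exact absurd h (lt_irrefl 0)
      have hApos : 0 < A y f := lt_of_lt_of_le hqpos (hq_le_A y f b)
      have hMFpos : 0 < MF f := lt_of_lt_of_le hApos (hA_le_MF y f)
      have hDdpos : 0 < Dd f b := lt_of_lt_of_le hqpos (hq_le_Dd y f b)
      have hCpos : 0 < C f f' b := lt_of_lt_of_le h (hqlam_le_C y f f' b)
      have hm2pos : 0 < m2 f f' := lt_of_lt_of_le (mul_pos hApos hlampos) (hAlam_le_m2 y f f')
      have hxpos : 0 < C f f' b * MF f / (Dd f b * m2 f f') :=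
        div_pos (mul_pos hCpos hMFpos) (mul_pos hDdpos hm2pos)
      have hargB : 0 < (Q y f b * lam y f f') * m2 f f' / ((A y f * lam y f f') * C f f' b) :=
        div_pos (mul_pos h hm2pos) (mul_pos (mul_pos hApos hlampos) hCpos)
      have hwx : w y f f' b = (Q y f b * lam y f f') / (C f f' b * MF f / (Dd f b * m2 f f')) := by
        rw [hwdef]
        simp only
        rw [div_div_eq_mul_div]
        ring
      have harg : Q y f b * MF f / (A y f * Dd f b) =
          ((Q y f b * lam y f f') * m2 f f' / ((A y f * lam y f f') * C f f' b)) *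
            (C f f' b * MF f / (Dd f b * m2 f f')) := by
        field_simp
      have hexp : (Q y f b * lam y f f') * Real.log (Q y f b * MF f / (A y f * Dd f b)) =
          (Q y f b * lam y f f') *
            Real.log ((Q y f b * lam y f f') * m2 f f' / ((A y f * lam y f f') * C f f' b)) +
          (Q y f b * lam y f f') * Real.log (C f f' b * MF f / (Dd f b * m2 f f')) := by
        rw [harg, Real.log_mul (ne_of_gt hargB) (ne_of_gt hxpos)]
        ring
      have hlog := hlog_aux (Q y f b * lam y f f') (C f f' b * MF f / (Dd f b * m2 f f')) h hxpos
      rw [hwx]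
      linarith
  -- sum of the weights
  have hSp : ∑ y, ∑ f, ∑ f', ∑ b, Q y f b * lam y f f' = 1 := by
    rw [← hQ1]
    refine Finset.sum_congr rfl fun y _ => Finset.sum_congr rfl fun f _ => ?_
    rw [Finset.sum_comm]
    refine Finset.sum_congr rfl fun b _ => ?_
    rw [← Finset.mul_sum]
    exact hqlam y f b
  have hSw : ∑ y, ∑ f, ∑ f', ∑ b, w y f f' b ≤ 1 := by
    have hre : ∑ y, ∑ f, ∑ f', ∑ b, w y f f' b = ∑ f, ∑ f', ∑ b, ∑ y, w y f f' b := by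
      rw [Finset.sum_comm]
      refine Finset.sum_congr rfl fun f _ => ?_
      rw [Finset.sum_comm]
      refine Finset.sum_congr rfl fun f' _ => ?_
      rw [Finset.sum_comm]
    have step1 : ∀ f f' b, ∑ y, w y f f' b ≤ Dd f b * m2 f f' / MF f := by
      intro f f' b
      rcases eq_or_ne (C f f' b) 0 with h | h
      · have hz : ∀ y, Q y f b * lam y f f' = 0 := by
          intro y
          have := (Finset.sum_eq_zero_iff_of_nonneg
            (fun y' (_ : y' ∈ Finset.univ) => mul_nonneg (hQ0 y' f b) (hlam0 y' f f'))).mp h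
          exact this y (Finset.mem_univ y)
        have : ∑ y, w y f f' b = 0 := by
          refine Finset.sum_eq_zero fun y _ => ?_
          rw [hwdef]; simp only; rw [hz y, zero_mul]
        rw [this]
        exact div_nonneg (mul_nonneg (hDd0 f b) (hm20 f f')) (hMF0 f)
      · have hCpos : 0 < C f f' b := lt_of_le_of_ne (hC0 f f' b) (Ne.symm h)
        have hex : ∃ y, 0 < Q y f b * lam y f f' := by
          by_contra hcon
          push_neg at hcon
          exact h (Finset.sum_eq_zero fun y _ => le_antisymm (hcon y)
            (mul_nonneg (hQ0 y f b) (hlam0 y f f')))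
        obtain ⟨y0, hy0⟩ := hex
        have hq0pos : 0 < Q y0 f b := by
          rcases (hQ0 y0 f b).lt_or_eq with h2 | h2
          · exact h2
          · rw [← h2, zero_mul] at hy0; exact absurd hy0 (lt_irrefl 0)
        have hMFpos : 0 < MF f :=
          lt_of_lt_of_le hq0pos (le_trans (hq_le_A y0 f b) (hA_le_MF y0 f))
        have hsum : ∑ y, w y f f' b = C f f' b * (Dd f b * m2 f f' / (C f f' b * MF f)) := by
          rw [hwdef]
          simp only
          rw [← Finset.sum_mul]
        rw [hsum]
        rw [show C f f' b * (Dd f b * m2 f f' / (C f f' b * MF f)) = Dd f b * m2 f f' / MF f by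
          field_simp]
    have step2 : ∀ f, ∑ f', ∑ b, Dd f b * m2 f f' / MF f ≤ MF f := by
      intro f
      rcases eq_or_ne (MF f) 0 with h | h
      · have hDz : ∀ b, Dd f b = 0 := by
          intro b
          have h2 : ∑ b', Dd f b' = 0 := (hDdsum f).trans h
          exact (Finset.sum_eq_zero_iff_of_nonneg
            (fun b' (_ : b' ∈ Finset.univ) => hDd0 f b')).mp h2 b (Finset.mem_univ b)
        have : ∑ f', ∑ b, Dd f b * m2 f f' / MF f = 0 := by
          refine Finset.sum_eq_zero fun f' _ => Finset.sum_eq_zero fun b _ => ?_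
          rw [hDz b, zero_mul, zero_div]
        rw [this, ← h]
      · refine le_of_eq ?_
        have h1 : ∀ f', ∑ b, Dd f b * m2 f f' / MF f = m2 f f' := by
          intro f'
          rw [← Finset.sum_div, ← Finset.sum_mul, hDdsum f]
          rw [mul_comm, mul_div_assoc, div_self h, mul_one]
        rw [Finset.sum_congr rfl fun f' _ => h1 f']
        exact hm2sum f
    have hMF1 : ∑ f, MF f = 1 := by
      rw [← hQ1]
      simp only [hMFdef, margF]
      exact Finset.sum_comm
    calc ∑ y, ∑ f, ∑ f', ∑ b, w y f f' b = ∑ f, ∑ f', ∑ b, ∑ y, w y f f' b := hre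
      _ ≤ ∑ f, ∑ f', ∑ b, Dd f b * m2 f f' / MF f :=
          Finset.sum_le_sum fun f _ => Finset.sum_le_sum fun f' _ =>
            Finset.sum_le_sum fun b _ => step1 f f' b
      _ ≤ ∑ f, MF f := Finset.sum_le_sum fun f _ => step2 f
      _ = 1 := hMF1
  -- assemble
  rw [hCMIQ', hCMIQ]
  have hsum_le : ∑ y, ∑ f, ∑ f', ∑ b, (Q y f b * lam y f f') *
      Real.log ((Q y f b * lam y f f') * m2 f f' / ((A y f * lam y f f') * C f f' b)) ≤
      ∑ y, ∑ f, ∑ f', ∑ b, ((Q y f b * lam y f f') *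
        Real.log (Q y f b * MF f / (A y f * Dd f b)) -
        ((Q y f b * lam y f f') - w y f f' b)) :=
    Finset.sum_le_sum fun y _ => Finset.sum_le_sum fun f _ =>
      Finset.sum_le_sum fun f' _ => Finset.sum_le_sum fun b _ => hkey y f f' b
  have hsplit : ∑ y, ∑ f, ∑ f', ∑ b, ((Q y f b * lam y f f') *
        Real.log (Q y f b * MF f / (A y f * Dd f b)) -
        ((Q y f b * lam y f f') - w y f f' b)) =
      (∑ y, ∑ f, ∑ f', ∑ b, (Q y f b * lam y f f') *
        Real.log (Q y f b * MF f / (A y f * Dd f b))) -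
      ((∑ y, ∑ f, ∑ f', ∑ b, Q y f b * lam y f f') -
        (∑ y, ∑ f, ∑ f', ∑ b, w y f f' b)) := by
    simp [Finset.sum_sub_distrib]
  rw [hsplit] at hsum_le
  linarith


lemma pw_aux (p w : ℝ) (hp : 0 ≤ p) (hw : 0 ≤ w) (hpos : 0 < p → 0 < w) :
    p - w ≤ p * Real.log (p / w) := by
  rcases eq_or_lt_of_le hp with h | h
  · simp [← h]; linarith
  · have hw' := hpos h
    have := hlog_aux p (p / w) h (div_pos h hw')
    have hx : p / (p / w) = w := by field_simp
    rw [hx] at this; exact this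


lemma condMI_nonneg_s7 {Y F B : Type*} [Fintype Y] [Fintype F] [Fintype B]
    (R : Y → F → B → ℝ) (hR : IsDist3 R) : 0 ≤ condMI R := by
  obtain ⟨hR0, hR1⟩ := hR
  set u := margYF R with hu
  set v := margFB R with hv
  set s := margF R with hs
  have hu0 : ∀ y f, 0 ≤ u y f := fun y f => Finset.sum_nonneg fun b _ => hR0 y f b
  have hv0 : ∀ f b, 0 ≤ v f b := fun f b => Finset.sum_nonneg fun y _ => hR0 y f b
  have hs0 : ∀ f, 0 ≤ s f := fun f =>
    Finset.sum_nonneg fun y _ => Finset.sum_nonneg fun b _ => hR0 y f b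
  set w : Y → F → B → ℝ := fun y f b => u y f * v f b / s f with hwdef
  have hw0 : ∀ y f b, 0 ≤ w y f b := fun y f b =>
    div_nonneg (mul_nonneg (hu0 y f) (hv0 f b)) (hs0 f)
  -- pointwise bound
  have hpt : ∀ y f b, R y f b - w y f b ≤
      R y f b * Real.log ((R y f b * s f) / (u y f * v f b)) := by
    intro y f b
    rcases eq_or_lt_of_le (hR0 y f b) with h | h
    · simp [← h]
      linarith [hw0 y f b]
    · have hup : 0 < u y f :=
        lt_of_lt_of_le h (Finset.single_le_sum (fun b' _ => hR0 y f b') (Finset.mem_univ b))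
      have hvp : 0 < v f b :=
        lt_of_lt_of_le h (Finset.single_le_sum (fun y' _ => hR0 y' f b) (Finset.mem_univ y))
      have hsp : 0 < s f :=
        lt_of_lt_of_le hup (Finset.single_le_sum (fun y' _ => hu0 y' f) (Finset.mem_univ y))
      have hwp : 0 < w y f b := div_pos (mul_pos hup hvp) hsp
      have heq : R y f b * s f / (u y f * v f b) = R y f b / w y f b := by
        rw [hwdef]
        rw [div_div_eq_mul_div]
      rw [heq]
      exact pw_aux _ _ (hR0 y f b) (hw0 y f b) fun _ => hwp
  -- sum of w bounded by 1
  have hvs : ∀ f, ∑ b, v f b = s f := by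
    intro f; rw [hv, hs]; simp only [margFB, margF]; exact Finset.sum_comm
  have hus : ∀ f, ∑ y, u y f = s f := by
    intro f; rfl
  have hwsum : ∀ y f, ∑ b, w y f b ≤ u y f := by
    intro y f
    have : ∑ b, w y f b = u y f * s f / s f := by
      rw [hwdef]
      simp only
      rw [← Finset.sum_div, ← Finset.mul_sum, hvs]
    rw [this]
    rcases eq_or_ne (s f) 0 with h | h
    · rw [h]; simp [hu0 y f]
    · rw [mul_div_assoc, div_self h, mul_one]
  have hSw : ∑ y, ∑ f, ∑ b, w y f b ≤ 1 := by
    rw [Finset.sum_comm]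
    calc ∑ f, ∑ y, ∑ b, w y f b ≤ ∑ f, ∑ y, u y f :=
          Finset.sum_le_sum fun f _ => Finset.sum_le_sum fun y _ => hwsum y f
      _ = ∑ f, s f := by exact Finset.sum_congr rfl fun f _ => hus f
      _ = 1 := by rw [← hR1]; exact Finset.sum_comm
  have hmain : ∑ y, ∑ f, ∑ b, (R y f b - w y f b) ≤ condMI R := by
    unfold condMI
    refine Finset.sum_le_sum fun y _ => Finset.sum_le_sum fun f _ => Finset.sum_le_sum fun b _ => ?_
    exact hpt y f b
  have hsplit : ∑ y, ∑ f, ∑ b, (R y f b - w y f b) =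
      1 - ∑ y, ∑ f, ∑ b, w y f b := by
    rw [← hR1]
    simp [Finset.sum_sub_distrib]
  linarith [hmain, hsplit ▸ hmain]

end Aux

/-- antitonicity in the conditioning argument:
Uni(Y; B | (F,F')) ≤ Uni(Y; B | F), where the right-hand side is computed for the
marginal distribution of (Y,F,B). -/
theorem stmt7 {Y F F' B : Type*} [Fintype Y] [Fintype F] [Fintype F'] [Fintype B]
    (P : Y → (F × F') → B → ℝ) (hP : IsDist3 P) :
    uni P ≤ uni (fun y f b => ∑ f' : F', P y (f, f') b) := by
  set P2 : Y → F → B → ℝ := fun y f b => ∑ f' : F', P y (f, f') b with hP2def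
  have hP2 : IsDist3 P2 := by
    constructor
    · intro y f b
      exact Finset.sum_nonneg fun f' _ => hP.1 y (f, f') b
    · rw [← hP.2]
      refine Finset.sum_congr rfl fun y _ => ?_
      rw [Fintype.sum_prod_type]
      simp only [hP2def]
      refine Finset.sum_congr rfl fun f _ => ?_
      exact Finset.sum_comm
  have hbdd : BddBelow (condMI '' Delta P) := by
    refine ⟨0, fun x hx => ?_⟩
    obtain ⟨R, hR, rfl⟩ := hx
    exact condMI_nonneg_s7 R hR.1
  have hne : (condMI '' Delta P2).Nonempty :=
    ⟨condMI P2, ⟨P2, ⟨hP2, fun y f => rfl, fun y b => rfl⟩, rfl⟩⟩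
  refine le_csInf hne ?_
  rintro c ⟨Q, hQ, rfl⟩
  obtain ⟨Q', hQ'mem, hle⟩ := core P hP Q hQ
  exact le_trans (csInf_le hbdd ⟨Q', hQ'mem, rfl⟩) hle
end

section
/- Suppose the conditional distribution P_{F|Y} is Blackwell sufficient for P_{B|Y}, i.e., there exists a channel (conditional distribution) P_{B'|F} with P_{B'|F} ∘ P_{F|Y} = P_{B|Y}, where (P_{B'|F} ∘ P_{F|Y})(b|y) = Σ_f P_{B'|F}(b|f)P_{F|Y}(f|y). Then Uni(Y; B|F) = 0. -/
open scoped BigOperators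

/-!
Blackwell sufficiency lets `B` be simulated from `F` through the channel `T`, so
`Q(y, f, b) = P(y, f) T(f, b)` has the same `(Y, F)` and `(Y, B)` marginals as `P`. Under `Q`
the chain `Y - F - B` is Markov, hence `I_Q(Y; B | F) = 0`. Conditional mutual information is
nonnegative (Gibbs' inequality against `Q_{Y|F} Q_{B|F} Q_F`), so the infimum defining
`Uni(Y; B | F)` is attained at `Q`.
-/

open Finset Real

lemma Real.sub_le_mul_log_div {q r : ℝ} (hq : 0 ≤ q) (hr : 0 ≤ r) (hrq : r = 0 → q = 0) :
    q - r ≤ q * log (q / r) := by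
  rcases hq.eq_or_lt with rfl | hq
  · simpa using hr
  have hr : 0 < r := hr.lt_of_ne fun h => hq.ne' (hrq h.symm)
  calc q - r = q * (1 - (q / r)⁻¹) := by field_simp
    _ ≤ q * log (q / r) := by gcongr; exact one_sub_inv_le_log_of_pos (div_pos hq hr)

section CondMI

variable {Y F B : Type*}

/-- The coupling `Q_{Y|F} Q_{B|F} Q_F`, under which `Y` and `B` are independent given `F`. -/
noncomputable def condProd [Fintype Y] [Fintype B] (Q : Y → F → B → ℝ) (y : Y) (f : F)
    (b : B) : ℝ :=
  margYF Q y f * margFB Q f b / margF Q f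

lemma sum_condProd [Fintype Y] [Fintype F] [Fintype B] (Q : Y → F → B → ℝ) :
    ∑ y, ∑ f, ∑ b, condProd Q y f b = ∑ y, ∑ f, ∑ b, Q y f b := by
  have hF : ∀ f, ∑ b, margFB Q f b = margF Q f := fun f => by
    simp only [margFB, margF]
    exact sum_comm
  have hfiber : ∀ f, ∑ y, ∑ b, condProd Q y f b = margF Q f := fun f => by
    simp only [condProd, ← sum_div, ← mul_sum, ← sum_mul, hF]
    rcases eq_or_ne (margF Q f) 0 with h | h
    · simp [h]
    · exact mul_div_cancel_right₀ _ h
  rw [sum_comm, sum_congr rfl fun f _ => hfiber f]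
  exact sum_comm

lemma eq_zero_of_condProd_eq_zero [Fintype Y] [Fintype B] {Q : Y → F → B → ℝ}
    (hQ : ∀ y f b, 0 ≤ Q y f b) {y : Y} {f : F} {b : B} (h : condProd Q y f b = 0) :
    Q y f b = 0 := by
  have hYF : Q y f b ≤ margYF Q y f := single_le_sum (fun b _ => hQ y f b) (mem_univ b)
  have hFB : Q y f b ≤ margFB Q f b := single_le_sum (fun y _ => hQ y f b) (mem_univ y)
  have hF : margYF Q y f ≤ margF Q f :=
    single_le_sum (fun y _ => sum_nonneg fun b _ => hQ y f b) (mem_univ y)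
  rcases div_eq_zero_iff.1 h with h | h
  · rcases mul_eq_zero.1 h with h | h <;> linarith [hQ y f b]
  · linarith [hQ y f b]

lemma condMI_nonneg_s8 [Fintype Y] [Fintype F] [Fintype B] {Q : Y → F → B → ℝ}
    (hQ : ∀ y f b, 0 ≤ Q y f b) : 0 ≤ condMI Q := by
  have hcp : ∀ y f b, 0 ≤ condProd Q y f b := fun y f b =>
    div_nonneg (mul_nonneg (sum_nonneg fun b _ => hQ y f b) (sum_nonneg fun y _ => hQ y f b))
      (sum_nonneg fun y _ => sum_nonneg fun b _ => hQ y f b)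
  calc (0 : ℝ) = ∑ y, ∑ f, ∑ b, (Q y f b - condProd Q y f b) := by
        simp only [sum_sub_distrib, sum_condProd, sub_self]
    _ ≤ ∑ y, ∑ f, ∑ b, Q y f b * log (Q y f b / condProd Q y f b) := by
        gcongr with y _ f _ b _
        exact sub_le_mul_log_div (hQ y f b) (hcp y f b) (eq_zero_of_condProd_eq_zero hQ)
    _ = condMI Q := by simp only [condProd, div_div_eq_mul_div, condMI]

/-- The joint law of `Y - F - B` when `B` is produced from `F` by the channel `T`. -/
def compChannel (p : Y → F → ℝ) (T : F → B → ℝ) (y : Y) (f : F) (b : B) : ℝ :=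
  p y f * T f b

lemma margYF_compChannel [Fintype B] (p : Y → F → ℝ) {T : F → B → ℝ}
    (hT : ∀ f, ∑ b, T f b = 1) (y : Y) (f : F) : margYF (compChannel p T) y f = p y f := by
  simp only [margYF, compChannel, ← mul_sum, hT, mul_one]

lemma condMI_compChannel [Fintype Y] [Fintype F] [Fintype B] (p : Y → F → ℝ)
    (T : F → B → ℝ) : condMI (compChannel p T) = 0 := by
  refine sum_eq_zero fun y _ => sum_eq_zero fun f _ => sum_eq_zero fun b _ => ?_
  have hratio : compChannel p T y f b * margF (compChannel p T) f =
      margYF (compChannel p T) y f * margFB (compChannel p T) f b := by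
    simp only [compChannel, margF, margYF, margFB, ← mul_sum, ← sum_mul]
    ring
  rw [hratio, log_div_self, mul_zero]

end CondMI

lemma uni_eq_zero_of_condMI_eq_zero {Y F B : Type*} [Fintype Y] [Fintype F] [Fintype B]
    {P Q : Y → F → B → ℝ} (hQ : Q ∈ Delta P) (h : condMI Q = 0) : uni P = 0 :=
  IsLeast.csInf_eq ⟨⟨Q, hQ, h⟩, by rintro _ ⟨Q', hQ', rfl⟩; exact condMI_nonneg_s8 hQ'.1.1⟩

/-- Blackwell sufficiency of P_{F|Y} for P_{B|Y} implies
Uni(Y;B|F) = 0. -/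
theorem stmt8 {Y F B : Type*} [Fintype Y] [Fintype F] [Fintype B]
    (P : Y → F → B → ℝ) (hP : IsDist3 P) (hpos : ∀ y, 0 < margY P y)
    (T : F → B → ℝ) (hT : RowStochastic T)
    (hch : ∀ y b, margYB P y b / margY P y =
      ∑ f, T f b * (margYF P y f / margY P y)) :
    uni P = 0 := by
  obtain ⟨hPnn, hPsum⟩ := hP
  obtain ⟨hTnn, hTrow⟩ := hT
  set Q := compChannel (margYF P) T
  have hQYF : ∀ y f, margYF Q y f = margYF P y f := margYF_compChannel _ hTrow
  have hQYB : ∀ y b, margYB Q y b = margYB P y b := fun y b => by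
    have h := hch y b
    simp only [mul_div_assoc', ← sum_div] at h
    rw [div_left_inj' (hpos y).ne'] at h
    rw [h]
    exact sum_congr rfl fun f _ => mul_comm _ _
  have hQnn : ∀ y f b, 0 ≤ Q y f b := fun y f b =>
    mul_nonneg (sum_nonneg fun b _ => hPnn y f b) (hTnn f b).1
  have hQsum : ∑ y, ∑ f, ∑ b, Q y f b = 1 := by
    change ∑ y, ∑ f, margYF Q y f = 1
    simp only [hQYF]
    exact hPsum
  exact uni_eq_zero_of_condMI_eq_zero ⟨⟨hQnn, hQsum⟩, hQYF, hQYB⟩ (condMI_compChannel _ _)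
end

section
/- Conversely, if Uni(Y; B|F) = 0 and P_Y(y) > 0 for all y, then P_{F|Y} is Blackwell sufficient with respect to P_{B|Y}: there exists a stochastic matrix T(f,b) (a channel from ℱ to ℬ) such that P_{B|Y}(b|y) = Σ_f T(f,b) P_{F|Y}(f|y) for all y, b. -/
open scoped BigOperators

/-
A minimizer `Q ∈ Δ_P` exists because `Δ_P` is compact and `I_Q(Y;B|F)` is continuous on the
nonnegative orthant, being a signed sum of entropies. Writing the conditional mutual information
as the Kullback–Leibler divergence of `Q` from `Q_{Y|F} Q_{B|F} Q_F`, Gibbs' inequality forces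
`Q = Q_{Y|F} Q_{B|F} Q_F` when it vanishes. Summing this factorization over `f` expresses
`P_{YB} = Q_{YB}` through `P_{YF} = Q_{YF}` and the channel `Q_{B|F}`.
-/

open Finset Real InformationTheory

theorem mul_log_div_eq_mul_klFun_add {p r : ℝ} (hpr : r = 0 → p = 0) :
    p * log (p / r) = r * klFun (p / r) + (p - r) := by
  rcases eq_or_ne r 0 with hr | hr
  · simp [hr, hpr hr]
  · rw [klFun_apply]
    field_simp
    ring

theorem eq_of_sum_mul_log_div_eq_zero {ι : Type*} [Fintype ι] {p r : ι → ℝ}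
    (hp : ∀ i, 0 ≤ p i) (hr : ∀ i, 0 ≤ r i) (hpr : ∀ i, r i = 0 → p i = 0)
    (hsum : ∑ i, p i = ∑ i, r i) (h : ∑ i, p i * log (p i / r i) = 0) (i : ι) :
    p i = r i := by
  have hkl_nonneg : ∀ i, 0 ≤ r i * klFun (p i / r i) :=
    fun i => mul_nonneg (hr i) (klFun_nonneg (div_nonneg (hp i) (hr i)))
  simp only [mul_log_div_eq_mul_klFun_add (hpr _), sum_add_distrib, sum_sub_distrib, hsum,
    sub_self, add_zero] at h
  rcases mul_eq_zero.1 ((sum_eq_zero_iff_of_nonneg fun i _ => hkl_nonneg i).1 h i (mem_univ i))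
    with hri | hkl
  · rw [hri, hpr i hri]
  · have hri : r i ≠ 0 := fun hri => by simp [hri, klFun_zero] at hkl
    rw [klFun_eq_zero_iff (div_nonneg (hp i) (hr i)), div_eq_one_iff_eq hri] at hkl
    exact hkl

section Marginals

variable {Y F B : Type*} {Q : Y → F → B → ℝ}

theorem margYF_nonneg [Fintype B] (hQ : ∀ y f b, 0 ≤ Q y f b) (y : Y) (f : F) :
    0 ≤ margYF Q y f :=
  sum_nonneg fun b _ => hQ y f b

theorem margFB_nonneg [Fintype Y] (hQ : ∀ y f b, 0 ≤ Q y f b) (f : F) (b : B) :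
    0 ≤ margFB Q f b :=
  sum_nonneg fun y _ => hQ y f b

theorem margF_nonneg [Fintype Y] [Fintype B] (hQ : ∀ y f b, 0 ≤ Q y f b) (f : F) :
    0 ≤ margF Q f :=
  sum_nonneg fun y _ => margYF_nonneg hQ y f

theorem le_margYF [Fintype B] (hQ : ∀ y f b, 0 ≤ Q y f b) (y : Y) (f : F) (b : B) :
    Q y f b ≤ margYF Q y f :=
  single_le_sum (fun b _ => hQ y f b) (mem_univ b)

theorem le_margFB [Fintype Y] (hQ : ∀ y f b, 0 ≤ Q y f b) (y : Y) (f : F) (b : B) :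
    Q y f b ≤ margFB Q f b :=
  single_le_sum (fun y _ => hQ y f b) (mem_univ y)

theorem margYF_le_margF [Fintype Y] [Fintype B] (hQ : ∀ y f b, 0 ≤ Q y f b) (y : Y) (f : F) :
    margYF Q y f ≤ margF Q f :=
  single_le_sum (fun y _ => margYF_nonneg hQ y f) (mem_univ y)

theorem le_margF [Fintype Y] [Fintype B] (hQ : ∀ y f b, 0 ≤ Q y f b) (y : Y) (f : F) (b : B) :
    Q y f b ≤ margF Q f :=
  (le_margYF hQ y f b).trans (margYF_le_margF hQ y f)

theorem margF_eq_sum_margFB [Fintype Y] [Fintype B] (f : F) :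
    margF Q f = ∑ b, margFB Q f b :=
  sum_comm

end Marginals

section ConditionalMutualInformation

variable {Y F B : Type*} [Fintype Y] [Fintype F] [Fintype B] {Q : Y → F → B → ℝ}

theorem condMI_eq_entropy (hQ : ∀ y f b, 0 ≤ Q y f b) :
    condMI Q = (∑ y, ∑ f, negMulLog (margYF Q y f)) + (∑ f, ∑ b, negMulLog (margFB Q f b))
      - (∑ f, negMulLog (margF Q f)) - ∑ y, ∑ f, ∑ b, negMulLog (Q y f b) := by
  have hterm : ∀ y f b, Q y f b * log (Q y f b * margF Q f / (margYF Q y f * margFB Q f b)) =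
      Q y f b * log (Q y f b) + Q y f b * log (margF Q f)
        - Q y f b * log (margYF Q y f) - Q y f b * log (margFB Q f b) := by
    intro y f b
    rcases (hQ y f b).eq_or_lt with h | h
    · simp [← h]
    have hYF := h.trans_le (le_margYF hQ y f b)
    have hFB := h.trans_le (le_margFB hQ y f b)
    have hF := h.trans_le (le_margF hQ y f b)
    rw [log_div (by positivity) (by positivity), log_mul h.ne' hF.ne',
      log_mul hYF.ne' hFB.ne']
    ring
  have hF : ∑ y, ∑ f, ∑ b, Q y f b * log (margF Q f) =
      ∑ f, margF Q f * log (margF Q f) := by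
    rw [sum_comm]
    simp only [margF, sum_mul]
  have hYF : ∑ y, ∑ f, ∑ b, Q y f b * log (margYF Q y f) =
      ∑ y, ∑ f, margYF Q y f * log (margYF Q y f) := by
    simp only [margYF, sum_mul]
  have hFB : ∑ y, ∑ f, ∑ b, Q y f b * log (margFB Q f b) =
      ∑ f, ∑ b, margFB Q f b * log (margFB Q f b) := by
    rw [sum_comm]
    simp only [margFB, sum_mul]
    exact sum_congr rfl fun f _ => sum_comm
  simp only [condMI, hterm, sum_add_distrib, sum_sub_distrib, hF, hYF, hFB, negMulLog,
    neg_mul, sum_neg_distrib]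
  ring

theorem continuousOn_condMI :
    ContinuousOn (condMI : (Y → F → B → ℝ) → ℝ) {Q | ∀ y f b, 0 ≤ Q y f b} := by
  refine ContinuousOn.congr (Continuous.continuousOn ?_) fun Q hQ => condMI_eq_entropy hQ
  simp only [margYF, margFB, margF]
  fun_prop

end ConditionalMutualInformation

section Minimizer

variable {Y F B : Type*} [Fintype Y] [Fintype F] [Fintype B]

theorem isClosed_Delta (P : Y → F → B → ℝ) : IsClosed (Delta P) := by
  simp only [Delta, IsDist3, margYF, margYB, Set.ofPred_and, Set.ofPred_forall]
  refine ((isClosed_iInter fun y => isClosed_iInter fun f => isClosed_iInter fun b =>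
    isClosed_le ?_ ?_).inter (isClosed_eq ?_ ?_)).inter ((isClosed_iInter fun y =>
    isClosed_iInter fun f => isClosed_eq ?_ ?_).inter (isClosed_iInter fun y =>
    isClosed_iInter fun b => isClosed_eq ?_ ?_)) <;> fun_prop

theorem Delta_subset_pi_Icc (P : Y → F → B → ℝ) :
    Delta P ⊆ Set.univ.pi fun _ => Set.univ.pi fun _ => Set.univ.pi fun _ => Set.Icc 0 1 := by
  rintro Q ⟨⟨hQ, hQ_sum⟩, -, -⟩ y - f - b -
  refine ⟨hQ y f b, ?_⟩
  calc Q y f b ≤ margF Q f := le_margF hQ y f b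
    _ ≤ ∑ f, margF Q f := single_le_sum (fun f _ => margF_nonneg hQ f) (mem_univ f)
    _ = 1 := by rw [← hQ_sum]; exact sum_comm

theorem isCompact_Delta (P : Y → F → B → ℝ) : IsCompact (Delta P) :=
  (isCompact_univ_pi fun _ => isCompact_univ_pi fun _ => isCompact_univ_pi fun _ =>
    isCompact_Icc).of_isClosed_subset (isClosed_Delta P) (Delta_subset_pi_Icc P)

theorem exists_mem_Delta_condMI_eq_uni {P : Y → F → B → ℝ} (hP : IsDist3 P) :
    ∃ Q ∈ Delta P, condMI Q = uni P :=
  ((isCompact_Delta P).image_of_continuousOn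
    (continuousOn_condMI.mono fun _ hQ => hQ.1.1)).sInf_mem
    ⟨_, P, ⟨hP, fun _ _ => rfl, fun _ _ => rfl⟩, rfl⟩

end Minimizer

section Factorization

variable {Y F B : Type*} [Fintype Y] [Fintype B] {Q : Y → F → B → ℝ}

/-- The distribution `Q_{Y|F} Q_{B|F} Q_F`, which makes `Y` and `B` independent given `F`. -/
noncomputable def condIndepCoupling (Q : Y → F → B → ℝ) (y : Y) (f : F) (b : B) : ℝ :=
  margYF Q y f * margFB Q f b / margF Q f

theorem sum_condIndepCoupling (Q : Y → F → B → ℝ) (f : F) :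
    ∑ y, ∑ b, condIndepCoupling Q y f b = margF Q f := by
  rcases eq_or_ne (margF Q f) 0 with h | h
  · simp [condIndepCoupling, h]
  calc ∑ y, ∑ b, condIndepCoupling Q y f b
      = (∑ y, margYF Q y f) * (∑ b, margFB Q f b) / margF Q f := by
        simp only [condIndepCoupling, sum_mul_sum, sum_div]
    _ = margF Q f := by rw [← margF_eq_sum_margFB]; field_simp; rfl

variable [Fintype F]

theorem condMI_eq_sum_mul_log_div_condIndepCoupling (Q : Y → F → B → ℝ) :
    condMI Q = ∑ y, ∑ f, ∑ b, Q y f b * log (Q y f b / condIndepCoupling Q y f b) := by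
  simp only [condMI, condIndepCoupling, div_div_eq_mul_div]

theorem eq_condIndepCoupling_of_condMI_eq_zero (hQ : ∀ y f b, 0 ≤ Q y f b)
    (h : condMI Q = 0) (y : Y) (f : F) (b : B) : Q y f b = condIndepCoupling Q y f b := by
  have hcoupling_nonneg : ∀ y f b, 0 ≤ condIndepCoupling Q y f b := fun y f b =>
    div_nonneg (mul_nonneg (margYF_nonneg hQ y f) (margFB_nonneg hQ f b)) (margF_nonneg hQ f)
  have hcoupling_eq_zero : ∀ y f b, condIndepCoupling Q y f b = 0 → Q y f b = 0 := by
    intro y f b h0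
    rcases div_eq_zero_iff.1 h0 with h0 | h0
    · rcases mul_eq_zero.1 h0 with h0 | h0
      · exact le_antisymm (h0 ▸ le_margYF hQ y f b) (hQ y f b)
      · exact le_antisymm (h0 ▸ le_margFB hQ y f b) (hQ y f b)
    · exact le_antisymm (h0 ▸ le_margF hQ y f b) (hQ y f b)
  have hsum : ∑ y, ∑ f, ∑ b, Q y f b = ∑ y, ∑ f, ∑ b, condIndepCoupling Q y f b := by
    rw [sum_comm, sum_comm (f := fun y f => ∑ b, condIndepCoupling Q y f b)]
    exact sum_congr rfl fun f _ => (sum_condIndepCoupling Q f).symm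
  rw [condMI_eq_sum_mul_log_div_condIndepCoupling] at h
  exact eq_of_sum_mul_log_div_eq_zero (p := fun x : Y × F × B => Q x.1 x.2.1 x.2.2)
    (fun x => hQ _ _ _) (fun x => hcoupling_nonneg _ _ _) (fun x => hcoupling_eq_zero _ _ _)
    (by simpa only [Fintype.sum_prod_type] using hsum)
    (by simpa only [Fintype.sum_prod_type] using h) (y, f, b)

end Factorization

theorem RowStochastic.of_nonneg_of_sum_eq_one {F B : Type*} [Fintype B] {T : F → B → ℝ}
    (hT : ∀ f b, 0 ≤ T f b) (hT_sum : ∀ f, ∑ b, T f b = 1) : RowStochastic T :=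
  ⟨fun f b => ⟨hT f b, (single_le_sum (fun b _ => hT f b) (mem_univ b)).trans_eq (hT_sum f)⟩,
    hT_sum⟩

section Channel

variable {Y F B : Type*} [Fintype Y] [Fintype F] [Fintype B] {Q : Y → F → B → ℝ}

/-- The channel `Q_{B|F}`, with the row `Q_B` where `Q_F` vanishes. -/
noncomputable def condDistBF (Q : Y → F → B → ℝ) (f : F) (b : B) : ℝ :=
  if margF Q f = 0 then margB Q b else margFB Q f b / margF Q f

theorem rowStochastic_condDistBF (hQ : IsDist3 Q) : RowStochastic (condDistBF Q) := by
  refine .of_nonneg_of_sum_eq_one (fun f b => ?_) fun f => ?_ <;> unfold condDistBF <;> split_ifs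
  · exact sum_nonneg fun y _ => sum_nonneg fun f _ => hQ.1 y f b
  · exact div_nonneg (margFB_nonneg hQ.1 f b) (margF_nonneg hQ.1 f)
  · rw [← hQ.2]
    simp only [margB]
    rw [sum_comm]
    exact sum_congr rfl fun y _ => sum_comm
  · rw [← sum_div, ← margF_eq_sum_margFB, div_self ‹_›]

theorem apply_eq_condDistBF_mul_margYF (hQ : ∀ y f b, 0 ≤ Q y f b)
    (hfact : ∀ y f b, Q y f b = condIndepCoupling Q y f b) (y : Y) (f : F) (b : B) :
    Q y f b = condDistBF Q f b * margYF Q y f := by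
  rw [hfact, condIndepCoupling, condDistBF]
  split_ifs with h
  · have hYF : margYF Q y f = 0 :=
      le_antisymm (h ▸ margYF_le_margF hQ y f) (margYF_nonneg hQ y f)
    simp [h, hYF]
  · ring

end Channel

theorem stmt9_general {Y F B : Type*} [Fintype Y] [Fintype F] [Fintype B]
    (P : Y → F → B → ℝ) (hP : IsDist3 P)
    (huni : uni P = 0) :
    ∃ T : F → B → ℝ, RowStochastic T ∧
      ∀ y b, margYB P y b / margY P y =
        ∑ f, T f b * (margYF P y f / margY P y) := by
  obtain ⟨Q, ⟨hQ, hQ_YF, hQ_YB⟩, hQ_min⟩ := exists_mem_Delta_condMI_eq_uni hP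
  have hfact := eq_condIndepCoupling_of_condMI_eq_zero hQ.1 (hQ_min.trans huni)
  refine ⟨condDistBF Q, rowStochastic_condDistBF hQ, fun y b => ?_⟩
  have hchannel : margYB Q y b = ∑ f, condDistBF Q f b * margYF Q y f :=
    sum_congr rfl fun f _ => apply_eq_condDistBF_mul_margYF hQ.1 hfact y f b
  simp only [mul_div_assoc', ← sum_div, ← hQ_YB, ← hQ_YF, hchannel]

/-- if Uni(Y;B|F) = 0 and P_Y > 0, then P_{F|Y} is Blackwell
sufficient for P_{B|Y}. -/
theorem stmt9 {Y F B : Type*} [Fintype Y] [Fintype F] [Fintype B]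
    (P : Y → F → B → ℝ) (hP : IsDist3 P) (hpos : ∀ y, 0 < margY P y)
    (huni : uni P = 0) :
    ∃ T : F → B → ℝ, RowStochastic T ∧
      ∀ y b, margYB P y b / margY P y =
        ∑ f, T f b * (margYF P y f / margY P y) :=
  stmt9_general P hP huni
end

section
/- The redundant information Red(Y; F, B) = I_P(Y; F) − Uni(Y; F|B) is symmetric in the sense that I_P(Y; F) − Uni(Y; F|B) = I_P(Y; B) − Uni(Y; B|F), i.e., the consistency identity Uni(Y; F|B) − Uni(Y; B|F) = I_P(Y; F) − I_P(Y; B) holds for the Bertschinger et al. definition. -/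
open scoped BigOperators

section AuxProof

variable {Y F B : Type*} [Fintype Y] [Fintype F] [Fintype B]

private lemma aux_log_ge {x : ℝ} (hx : 0 < x) : 1 - x⁻¹ ≤ Real.log x := by
  have h := Real.log_le_sub_one_of_pos (inv_pos.mpr hx)
  rw [Real.log_inv] at h
  linarith

private lemma aux_mul_log_div_ge {a b : ℝ} (ha : 0 < a) (hb : 0 < b) :
    a - b ≤ a * Real.log (a / b) := by
  have h := aux_log_ge (div_pos ha hb)
  have h2 : (a / b)⁻¹ = b / a := by
    field_simp
  rw [h2] at h
  have h3 := mul_le_mul_of_nonneg_left h ha.le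
  have h4 : a * (1 - b / a) = a - b := by
    field_simp
  linarith

private lemma aux_condMI_nonneg (Q : Y → F → B → ℝ) (hQ : IsDist3 Q) : 0 ≤ condMI Q := by
  obtain ⟨hpos, hsum⟩ := hQ
  have hYFnn : ∀ y f, 0 ≤ margYF Q y f := fun y f =>
    Finset.sum_nonneg fun b _ => hpos y f b
  have hFBnn : ∀ f b, 0 ≤ margFB Q f b := fun f b =>
    Finset.sum_nonneg fun y _ => hpos y f b
  have hFnn : ∀ f, 0 ≤ margF Q f := fun f =>
    Finset.sum_nonneg fun y _ => Finset.sum_nonneg fun b _ => hpos y f b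
  have key : ∀ y f b,
      Q y f b - margYF Q y f * margFB Q f b / margF Q f ≤
      Q y f b * Real.log ((Q y f b * margF Q f) / (margYF Q y f * margFB Q f b)) := by
    intro y f b
    rcases eq_or_lt_of_le (hpos y f b) with h0 | h0
    · rw [← h0]
      simp only [zero_sub, zero_mul]
      have : 0 ≤ margYF Q y f * margFB Q f b / margF Q f :=
        div_nonneg (mul_nonneg (hYFnn y f) (hFBnn f b)) (hFnn f)
      linarith
    · have hYF : 0 < margYF Q y f :=
        lt_of_lt_of_le h0 (Finset.single_le_sum (fun b' _ => hpos y f b') (Finset.mem_univ b))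
      have hFB : 0 < margFB Q f b :=
        lt_of_lt_of_le h0 (Finset.single_le_sum (fun y' _ => hpos y' f b) (Finset.mem_univ y))
      have hF : 0 < margF Q f := by
        refine lt_of_lt_of_le hYF ?_
        exact Finset.single_le_sum (fun y' _ => Finset.sum_nonneg fun b' _ => hpos y' f b')
          (Finset.mem_univ y)
      have h := aux_mul_log_div_ge (mul_pos h0 hF) (mul_pos hYF hFB)
      set L := Real.log ((Q y f b * margF Q f) / (margYF Q y f * margFB Q f b)) with hL
      rw [← mul_le_mul_iff_of_pos_right hF]
      have e1 : (Q y f b - margYF Q y f * margFB Q f b / margF Q f) * margF Q f =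
          Q y f b * margF Q f - margYF Q y f * margFB Q f b := by
        field_simp
      rw [e1]
      nlinarith [h]
  have hsum2 : ∑ y, ∑ f, ∑ b,
      (Q y f b - margYF Q y f * margFB Q f b / margF Q f) ≤ condMI Q := by
    unfold condMI
    refine Finset.sum_le_sum fun y _ => Finset.sum_le_sum fun f _ =>
      Finset.sum_le_sum fun b _ => key y f b
  have hmFsum : ∀ f, ∑ b, margFB Q f b = margF Q f := by
    intro f
    rw [margF, Finset.sum_comm]
    rfl
  have hmYFsum : ∀ f, ∑ y, margYF Q y f = margF Q f := fun f => rfl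
  have hR : ∑ y, ∑ f, ∑ b, margYF Q y f * margFB Q f b / margF Q f ≤ 1 := by
    rw [Finset.sum_comm]
    have hf : ∀ f, ∑ y, ∑ b, margYF Q y f * margFB Q f b / margF Q f ≤ margF Q f := by
      intro f
      have hinner : ∀ y, ∑ b, margYF Q y f * margFB Q f b / margF Q f =
          margYF Q y f * margF Q f / margF Q f := by
        intro y
        rw [← Finset.sum_div, ← Finset.mul_sum, hmFsum]
      simp only [hinner]
      by_cases hc : margF Q f = 0
      · simp [hc]
      · have : ∀ y, margYF Q y f * margF Q f / margF Q f = margYF Q y f := by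
          intro y
          field_simp
        simp only [this]
        rw [hmYFsum]
    calc ∑ f, ∑ y, ∑ b, margYF Q y f * margFB Q f b / margF Q f ≤ ∑ f, margF Q f :=
          Finset.sum_le_sum fun f _ => hf f
      _ = 1 := by rw [← hsum, Finset.sum_comm]; rfl
  have hsplit : ∑ y, ∑ f, ∑ b,
      (Q y f b - margYF Q y f * margFB Q f b / margF Q f) =
      1 - ∑ y, ∑ f, ∑ b, margYF Q y f * margFB Q f b / margF Q f := by
    rw [← hsum]
    simp [Finset.sum_sub_distrib]
  linarith

private lemma aux_condMI_swap (Q : Y → F → B → ℝ) (hpos : ∀ y f b, 0 ≤ Q y f b) :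
    condMI (fun y b f => Q y f b) = condMI Q + mutYF Q - mutYB Q := by
  have hLHS : condMI (fun y b f => Q y f b) =
      ∑ y, ∑ b, ∑ f, Q y f b *
        Real.log ((Q y f b * margB Q b) / (margYB Q y b * margFB Q f b)) := rfl
  have hYFe : mutYF Q = ∑ y, ∑ f, ∑ b,
      Q y f b * Real.log (margYF Q y f / (margY Q y * margF Q f)) := by
    refine Finset.sum_congr rfl fun y _ => Finset.sum_congr rfl fun f _ => ?_
    exact Finset.sum_mul ..
  have hYBe : mutYB Q = ∑ y, ∑ b, ∑ f,
      Q y f b * Real.log (margYB Q y b / (margY Q y * margB Q b)) := by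
    refine Finset.sum_congr rfl fun y _ => Finset.sum_congr rfl fun b _ => ?_
    exact Finset.sum_mul ..
  have hpt : ∀ y f b,
      Q y f b * Real.log ((Q y f b * margB Q b) / (margYB Q y b * margFB Q f b)) =
      Q y f b * Real.log ((Q y f b * margF Q f) / (margYF Q y f * margFB Q f b)) +
      Q y f b * Real.log (margYF Q y f / (margY Q y * margF Q f)) -
      Q y f b * Real.log (margYB Q y b / (margY Q y * margB Q b)) := by
    intro y f b
    rcases eq_or_lt_of_le (hpos y f b) with h0 | h0
    · rw [← h0]; ring
    · have hYF : 0 < margYF Q y f :=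
        lt_of_lt_of_le h0 (Finset.single_le_sum (fun b' _ => hpos y f b') (Finset.mem_univ b))
      have hYB : 0 < margYB Q y b :=
        lt_of_lt_of_le h0 (Finset.single_le_sum (fun f' _ => hpos y f' b) (Finset.mem_univ f))
      have hFB : 0 < margFB Q f b :=
        lt_of_lt_of_le h0 (Finset.single_le_sum (fun y' _ => hpos y' f b) (Finset.mem_univ y))
      have hY : 0 < margY Q y := lt_of_lt_of_le hYF
        (Finset.single_le_sum (fun f' _ => Finset.sum_nonneg fun b' _ => hpos y f' b')
          (Finset.mem_univ f))
      have hF : 0 < margF Q f := lt_of_lt_of_le hYF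
        (Finset.single_le_sum (fun y' _ => Finset.sum_nonneg fun b' _ => hpos y' f b')
          (Finset.mem_univ y))
      have hBp : 0 < margB Q b := lt_of_lt_of_le hYB
        (Finset.single_le_sum (fun y' _ => Finset.sum_nonneg fun f' _ => hpos y' f' b)
          (Finset.mem_univ y))
      rw [Real.log_div (by positivity) (by positivity),
          Real.log_div (by positivity) (by positivity),
          Real.log_div (by positivity) (by positivity),
          Real.log_div (by positivity) (by positivity),
          Real.log_mul (by positivity) (by positivity),
          Real.log_mul (by positivity) (by positivity),
          Real.log_mul (by positivity) (by positivity),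
          Real.log_mul (by positivity) (by positivity),
          Real.log_mul (by positivity) (by positivity),
          Real.log_mul (by positivity) (by positivity)]
      ring
  rw [hLHS, hYFe, hYBe]
  have hcomm1 : ∑ y, ∑ b, ∑ f, Q y f b *
      Real.log ((Q y f b * margB Q b) / (margYB Q y b * margFB Q f b)) =
      ∑ y, ∑ f, ∑ b, Q y f b *
      Real.log ((Q y f b * margB Q b) / (margYB Q y b * margFB Q f b)) :=
    Finset.sum_congr rfl fun y _ => Finset.sum_comm
  have hcomm2 : ∑ y, ∑ b, ∑ f, Q y f b *
      Real.log (margYB Q y b / (margY Q y * margB Q b)) =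
      ∑ y, ∑ f, ∑ b, Q y f b *
      Real.log (margYB Q y b / (margY Q y * margB Q b)) :=
    Finset.sum_congr rfl fun y _ => Finset.sum_comm
  rw [hcomm1, hcomm2]
  unfold condMI
  rw [← Finset.sum_add_distrib, ← Finset.sum_sub_distrib]
  refine Finset.sum_congr rfl fun y _ => ?_
  rw [← Finset.sum_add_distrib, ← Finset.sum_sub_distrib]
  refine Finset.sum_congr rfl fun f _ => ?_
  rw [← Finset.sum_add_distrib, ← Finset.sum_sub_distrib]
  exact Finset.sum_congr rfl fun b _ => hpt y f b

private lemma aux_mutYF_eq {Q P : Y → F → B → ℝ}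
    (h : ∀ y f, margYF Q y f = margYF P y f) : mutYF Q = mutYF P := by
  have hY : ∀ y, margY Q y = margY P y := by
    intro y
    show ∑ f, margYF Q y f = ∑ f, margYF P y f
    exact Finset.sum_congr rfl fun f _ => h y f
  have hF : ∀ f, margF Q f = margF P f := by
    intro f
    show ∑ y, margYF Q y f = ∑ y, margYF P y f
    exact Finset.sum_congr rfl fun y _ => h y f
  unfold mutYF
  refine Finset.sum_congr rfl fun y _ => Finset.sum_congr rfl fun f _ => ?_
  rw [h y f, hY y, hF f]

private lemma aux_mutYB_eq {Q P : Y → F → B → ℝ}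
    (h : ∀ y b, margYB Q y b = margYB P y b) : mutYB Q = mutYB P := by
  have hY : ∀ y, margY Q y = margY P y := by
    intro y
    have h1 : margY Q y = ∑ b, margYB Q y b := by
      rw [margY, Finset.sum_comm]; rfl
    have h2 : margY P y = ∑ b, margYB P y b := by
      rw [margY, Finset.sum_comm]; rfl
    rw [h1, h2]
    exact Finset.sum_congr rfl fun b _ => h y b
  have hB : ∀ b, margB Q b = margB P b := by
    intro b
    show ∑ y, margYB Q y b = ∑ y, margYB P y b
    exact Finset.sum_congr rfl fun y _ => h y b
  unfold mutYB
  refine Finset.sum_congr rfl fun y _ => Finset.sum_congr rfl fun b _ => ?_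
  rw [h y b, hY y, hB b]

private lemma aux_delta_swap (P : Y → F → B → ℝ) (Q' : Y → B → F → ℝ) :
    Q' ∈ Delta (fun y b f => P y f b) ↔ (fun y f b => Q' y b f) ∈ Delta P := by
  constructor
  · rintro ⟨⟨hpos, hsum⟩, h1, h2⟩
    refine ⟨⟨fun y f b => hpos y b f, ?_⟩, fun y f => h2 y f, fun y b => h1 y b⟩
    rw [← hsum]
    exact Finset.sum_congr rfl fun y _ => Finset.sum_comm
  · rintro ⟨⟨hpos, hsum⟩, h1, h2⟩
    refine ⟨⟨fun y b f => hpos y f b, ?_⟩, fun y b => h2 y b, fun y f => h1 y f⟩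
    rw [← hsum]
    exact Finset.sum_congr rfl fun y _ => Finset.sum_comm

end AuxProof


/-- consistency identity
I_P(Y;F) − Uni(Y;F|B) = I_P(Y;B) − Uni(Y;B|F), where Uni(Y;F|B) is `uni` of the
distribution with the roles of F and B swapped. -/
theorem stmt12 {Y F B : Type*} [Fintype Y] [Fintype F] [Fintype B]
    (P : Y → F → B → ℝ) (hP : IsDist3 P) :
    mutYF P - uni (fun y b f => P y f b) = mutYB P - uni P := by
  set c : ℝ := mutYF P - mutYB P with hc
  set S : Set ℝ := condMI '' Delta P with hS
  have hPmem : P ∈ Delta P := ⟨hP, fun _ _ => rfl, fun _ _ => rfl⟩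
  have hne : S.Nonempty := ⟨condMI P, P, hPmem, rfl⟩
  have hbdd : BddBelow S := by
    refine ⟨0, ?_⟩
    rintro x ⟨Q, hQ, rfl⟩
    exact aux_condMI_nonneg Q hQ.1
  have himg : condMI '' Delta (fun y b f => P y f b) = (fun x => x + c) '' S := by
    ext x
    constructor
    · rintro ⟨Q', hQ', rfl⟩
      have hmem := (aux_delta_swap P Q').mp hQ'
      set Q : Y → F → B → ℝ := fun y f b => Q' y b f with hQdef
      have hswap : condMI Q' = condMI Q + mutYF Q - mutYB Q :=
        aux_condMI_swap Q hmem.1.1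
      refine ⟨condMI Q, ⟨Q, hmem, rfl⟩, ?_⟩
      have e1 : mutYF Q = mutYF P := aux_mutYF_eq hmem.2.1
      have e2 : mutYB Q = mutYB P := aux_mutYB_eq hmem.2.2
      rw [hswap, e1, e2, hc]
      ring
    · rintro ⟨_, ⟨Q, hQ, rfl⟩, rfl⟩
      set Q' : Y → B → F → ℝ := fun y b f => Q y f b with hQ'def
      have hmem' : Q' ∈ Delta (fun y b f => P y f b) := (aux_delta_swap P Q').mpr hQ
      refine ⟨Q', hmem', ?_⟩
      have hswap : condMI Q' = condMI Q + mutYF Q - mutYB Q :=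
        aux_condMI_swap Q hQ.1.1
      have e1 : mutYF Q = mutYF P := aux_mutYF_eq hQ.2.1
      have e2 : mutYB Q = mutYB P := aux_mutYB_eq hQ.2.2
      rw [hswap, e1, e2, hc]
      ring
  have huni : uni (fun y b f => P y f b) = uni P + c := by
    rw [uni, himg]
    have := (OrderIso.addRight c).map_csInf' hne hbdd
    simp only [OrderIso.addRight_apply] at this
    rw [← this]
    rfl
  rw [huni, hc]
  ring
end
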